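/- arXiv:1006.3930 — 2 statements merged into one kernel-verified Lean document; each statement's English description precedes it below -/
import Mathlib

section
/- Let C be a small category. The complete lattice of Grothendieck topologies on C (ordered by inclusion) is a Heyting algebra: for any Grothendieck topologies J and K on C there exists a Grothendieck topology J ⇨ K which is the largest Grothendieck topology H on C such that J ⊓ H ≤ K. -/
open CategoryTheory

/-- The Heyting implication of Grothendieck topologies: a sieve `S` on `X` is covering
iff every sieve containing a pullback of `S` which is `J`-covering is `K`-covering. -/
def grothendieckImp (C : Type u) [SmallCategory C] (J K : GrothendieckTopology C) :
    GrothendieckTopology C where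
  sieves X := {S | ∀ ⦃Y : C⦄ (h : Y ⟶ X) (T : Sieve Y), S.pullback h ≤ T → T ∈ J Y → T ∈ K Y}
  top_mem' X := by
    intro Y h T hle _
    have : T = ⊤ := top_le_iff.mp (by simpa using hle)
    rw [this]; exact K.top_mem Y
  pullback_stable' := by
    intro X Y S g hS Z h T hle hJ
    exact hS (h ≫ g) T (by rw [Sieve.pullback_comp]; exact hle) hJ
  transitive' := by
    intro X S hS R hR Y h T hle hJ
    have hW : (S.pullback h ⊔ T) ∈ K Y :=
      hS h _ le_sup_left (J.superset_covering le_sup_right hJ)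
    refine K.transitive hW T ?_
    intro Z w hw
    rcases hw with hw | hw
    · -- `S (w ≫ h)`
      have h1 : R.pullback (w ≫ h) ∈
          {S : Sieve Z | ∀ ⦃Y : C⦄ (h : Y ⟶ Z) (T : Sieve Y),
            S.pullback h ≤ T → T ∈ J Y → T ∈ K Y} := hR hw
      refine h1 (𝟙 Z) (T.pullback w) ?_ (J.pullback_stable w hJ)
      rw [Sieve.pullback_id, Sieve.pullback_comp]
      exact Sieve.pullback_monotone w hle
    · -- `T w`
      rw [Sieve.pullback_eq_top_of_mem _ hw]
      exact K.top_mem Z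

/-- **The lattice of Grothendieck topologies is a Heyting algebra.**
For any Grothendieck topologies `J` and `K` on a small category `C`, there exists a
Grothendieck topology `H` (the Heyting implication `J ⇨ K`) which is the largest
Grothendieck topology on `C` whose meet with `J` lies below `K`. -/
theorem grothendieckTopology_heyting_implication
    (C : Type u) [SmallCategory C] (J K : GrothendieckTopology C) :
    ∃ H : GrothendieckTopology C,
      J ⊓ H ≤ K ∧ ∀ H' : GrothendieckTopology C, J ⊓ H' ≤ K → H' ≤ H := by
  refine ⟨grothendieckImp C J K, ?_, ?_⟩
  · intro X S hS
    have hJS : S ∈ J X := (GrothendieckTopology.mem_sInf _ _).mp hS J (by simp)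
    have hHS : S ∈ grothendieckImp C J K X :=
      (GrothendieckTopology.mem_sInf _ _).mp hS (grothendieckImp C J K) (by simp)
    simpa using hHS (𝟙 X) S (by rw [Sieve.pullback_id]) hJS
  · intro H' hH' X S hS
    intro Y h T hle hJT
    have hT : T ∈ H' Y := H'.superset_covering hle (H'.pullback_stable h hS)
    have hmem : T ∈ (J ⊓ H') Y := by
      show T ∈ (sInf {J, H'} : GrothendieckTopology C) Y
      rw [GrothendieckTopology.mem_sInf]
      rintro t (rfl | rfl)
      · exact hJT
      · exact hT
    exact hH' _ hmem
end

section
/- Let D be a nonempty small category satisfying the right Ore condition (every pair of morphisms with common codomain can be completed to a commutative square) and let J_at be the atomic topology on D, whose covering sieves are exactly the nonempty sieves. Then the following are equivalent: (i) for any two objects a and b of D there exist an object d and morphisms d → a and d → b; (ii) the topos of sheaves Sh(D, J_at) (of set-valued sheaves) is two-valued, i.e., the lattice of subobjects of its terminal object has exactly two elements, the bottom and the top, and these are distinct. -/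
/-!
A subobject of the terminal sheaf is determined by its support, the set of objects over which it
has a (necessarily unique) section. For the atomic topology the possible supports are exactly the
sets of objects closed under morphisms in both directions, i.e. the unions of connected components
of `D`. So the topos is two-valued iff `D` is connected, and under the Ore condition, which
completes every cospan to a span, connectedness is the joint embedding property.
-/

open CategoryTheory CategoryTheory.Limits Opposite GrothendieckTopology
universe u

def IsTwoValued (α : Type*) [Preorder α] : Prop :=
  ∃ x y : α, IsBot x ∧ IsTop y ∧ x ≠ y ∧ ∀ z, z = x ∨ z = y

lemma OrderIso.isTwoValued {α β : Type*} [Preorder α] [Preorder β] (e : α ≃o β) :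
    IsTwoValued α → IsTwoValued β := by
  rintro ⟨x, y, hx, hy, hxy, h⟩
  refine ⟨e x, e y, fun _ => e.le_symm_apply.1 (hx _), fun _ => e.symm_apply_le.1 (hy _),
    e.injective.ne hxy, fun z => ?_⟩
  simpa [e.symm_apply_eq] using h (e.symm z)

lemma isTwoValued_subtype_iff {X : Type*} [Nonempty X] {p : Set X → Prop}
    (h0 : p ∅) (h1 : p .univ) :
    IsTwoValued {U // p U} ↔ ∀ U, p U → U = ∅ ∨ U = Set.univ := by
  constructor
  · rintro ⟨x, y, hx, hy, -, h⟩ U hU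
    have hx : x.1 = ∅ := Set.subset_empty_iff.1 (hx ⟨∅, h0⟩)
    have hy : y.1 = .univ := Set.univ_subset_iff.1 (hy ⟨.univ, h1⟩)
    rcases h ⟨U, hU⟩ with rfl | rfl
    exacts [.inl hx, .inr hy]
  · intro h
    refine ⟨⟨∅, h0⟩, ⟨.univ, h1⟩, fun _ => Set.empty_subset _, fun _ => Set.subset_univ _,
      fun e => Set.empty_ne_univ (congrArg Subtype.val e), fun ⟨U, hU⟩ => ?_⟩
    rcases h U hU with rfl | rfl <;> simp

namespace CategoryTheory.Sheaf

variable {D : Type u} [SmallCategory D] {J : GrothendieckTopology D}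

def support (F : Sheaf J (Type u)) : Set D := {c | Nonempty (F.obj.obj (op c))}

variable {F G : Sheaf J (Type u)}

lemma support_mono (f : F ⟶ G) : F.support ⊆ G.support :=
  fun c ⟨s⟩ => ⟨f.hom.app (op c) s⟩

lemma hom_ext_of_subsingleton (hG : ∀ c, Subsingleton (G.obj.obj c)) (f g : F ⟶ G) : f = g :=
  Sheaf.hom_ext (NatTrans.ext (funext fun _ => ConcreteCategory.hom_ext _ _ fun _ =>
    Subsingleton.elim _ _))

lemma nonempty_hom_of_support_subset (hG : ∀ c, Subsingleton (G.obj.obj c))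
    (h : F.support ⊆ G.support) : Nonempty (F ⟶ G) :=
  ⟨⟨{ app := fun c => ↾fun s => (h (⟨s⟩ : Nonempty (F.obj.obj (op c.unop)))).some
      naturality := fun _ _ _ => ConcreteCategory.hom_ext _ _ fun _ => Subsingleton.elim _ _ }⟩⟩

instance (c : Dᵒᵖ) : Subsingleton ((⊤_ Sheaf J (Type u)).obj.obj c) :=
  (Types.isTerminalEquivUnique _ ((terminalIsTerminal.isTerminalObj
    (sheafToPresheaf J (Type u) ⋙ (evaluation _ _).obj c)))).instSubsingleton

lemma subsingleton_of_mono_terminal (g : G ⟶ ⊤_ _) [Mono g] (c : Dᵒᵖ) :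
    Subsingleton (G.obj.obj c) :=
  ((mono_iff_injective (g.hom.app c)).1 inferInstance).subsingleton

lemma support_subset_support_iff_le {P Q : Subobject (⊤_ Sheaf J (Type u))} :
    (P : Sheaf J (Type u)).support ⊆ (Q : Sheaf J (Type u)).support ↔ P ≤ Q := by
  refine ⟨fun h => ?_, fun h => support_mono (Subobject.ofLE P Q h)⟩
  have := subsingleton_of_mono_terminal Q.arrow
  obtain ⟨φ⟩ := nonempty_hom_of_support_subset inferInstance h
  exact Subobject.le_of_comm φ (terminal.hom_ext _ _)

end CategoryTheory.Sheaf

namespace CategoryTheory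

variable {D : Type u} [SmallCategory D]

/-- `U` is a union of connected components of `D`. -/
def IsSaturated (U : Set D) : Prop := ∀ ⦃b c : D⦄, (b ⟶ c) → (b ∈ U ↔ c ∈ U)

namespace GrothendieckTopology.atomic

variable (hro : RightOreCondition D)

lemma support_isSaturated (F : Sheaf (atomic hro) (Type u)) [∀ c, Subsingleton (F.obj.obj c)] :
    IsSaturated F.support := by
  intro b c g
  refine ⟨fun ⟨s⟩ => ?_, fun ⟨s⟩ => ⟨F.obj.map g.op s⟩⟩
  -- The sieve generated by `g` is nonempty, hence covering, and any family of elements of a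
  -- subsingleton-valued presheaf is compatible; its amalgamation is a section over `c`.
  have hsheaf := (isSheaf_iff_isSheaf_of_type _ F.obj).1 F.property
  let S := Sieve.generate (Presieve.singleton g)
  have hS : S ∈ atomic hro c := ⟨b, g, Sieve.le_generate _ _ _ (Presieve.singleton_self g)⟩
  have hne : ∀ {d : D} (f : d ⟶ c), S f → Nonempty (F.obj.obj (op d)) := by
    rintro d f ⟨_, h, _, ⟨⟩, -⟩
    exact ⟨F.obj.map h.op s⟩
  obtain ⟨t, -⟩ := (hsheaf S hS (fun _ f hf => (hne f hf).some)
    fun _ _ _ _ _ _ _ _ _ _ => Subsingleton.elim _ _).exists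
  exact ⟨t⟩

variable {U : Set D}

def indicator (hU : IsSaturated U) : Sheaf (atomic hro) (Type u) where
  obj :=
    { obj c := {_x : PUnit.{u+1} // c.unop ∈ U}
      map f := ↾fun x => ⟨x.1, (hU f.unop).2 x.2⟩ }
  property := by
    rw [isSheaf_iff_isSheaf_of_type]
    rintro c S ⟨b, f, hf⟩ x -
    exact ⟨⟨PUnit.unit, (hU f).1 (x f hf).2⟩, fun _ _ _ => rfl, fun _ _ => rfl⟩

instance (hU : IsSaturated U) (c : Dᵒᵖ) : Subsingleton ((indicator hro hU).obj.obj c) :=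
  inferInstanceAs (Subsingleton {_x : PUnit // _})

lemma support_indicator (hU : IsSaturated U) : (indicator hro hU).support = U :=
  Set.ext fun _ => ⟨fun ⟨x⟩ => x.2, fun h => ⟨⟨PUnit.unit, h⟩⟩⟩

noncomputable def subobjectTerminalOrderIso :
    Subobject (⊤_ Sheaf (atomic hro) (Type u)) ≃o {U : Set D // IsSaturated U} :=
  .ofSurjective
    (.ofMapLEIff
      (fun P => ⟨(P : Sheaf (atomic hro) (Type u)).support,
        have := Sheaf.subsingleton_of_mono_terminal P.arrow
        support_isSaturated hro _⟩)
      fun _ _ => Sheaf.support_subset_support_iff_le)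
    fun ⟨U, hU⟩ => by
      have : Mono (terminal.from (indicator hro hU)) :=
        IsSubterminal.mono_terminal_from fun _ _ _ =>
          Sheaf.hom_ext_of_subsingleton inferInstance _ _
      let e := Subobject.underlyingIso (terminal.from (indicator hro hU))
      refine ⟨Subobject.mk (terminal.from (indicator hro hU)), Subtype.ext ?_⟩
      exact (Sheaf.support_mono e.hom).antisymm (Sheaf.support_mono e.inv) |>.trans
        (support_indicator hro hU)

end GrothendieckTopology.atomic

lemma forall_isSaturated_iff_jointEmbedding (hro : RightOreCondition D) :
    (∀ U : Set D, IsSaturated U → U = ∅ ∨ U = Set.univ) ↔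
      ∀ a b : D, ∃ (d : D) (_ : d ⟶ a) (_ : d ⟶ b), True := by
  constructor
  · intro h a b
    let V : Set D := {c | ∃ (d : D) (_ : d ⟶ c) (_ : d ⟶ a), True}
    have hV : IsSaturated V := by
      intro c c' f
      refine ⟨fun ⟨d, g, k, _⟩ => ⟨d, g ≫ f, k, trivial⟩, fun ⟨d, g, k, _⟩ => ?_⟩
      obtain ⟨e, p, q, -⟩ := hro f g
      exact ⟨e, p, q ≫ k, trivial⟩
    obtain ⟨d, g, k, -⟩ : b ∈ V := by
      rcases h V hV with hV | hV
      · exact (Set.eq_empty_iff_forall_notMem.1 hV a ⟨a, 𝟙 a, 𝟙 a, trivial⟩).elim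
      · exact hV ▸ Set.mem_univ b
    exact ⟨d, k, g, trivial⟩
  · intro h U hU
    refine or_iff_not_imp_left.2 fun hne => Set.eq_univ_of_forall fun b => ?_
    obtain ⟨a, ha⟩ := Set.nonempty_iff_ne_empty.2 hne
    obtain ⟨d, f, g, -⟩ := h a b
    exact (hU g).1 ((hU f).2 ha)

end CategoryTheory

/-- **Joint embedding corresponds to two-valuedness of the atomic topos.**
Let `D` be a nonempty small category satisfying the right Ore condition and let
`J` be the atomic topology on `D` (the covering sieves are exactly the nonempty
sieves). Then `D` satisfies the joint embedding property (any two objects admit a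
common "source" object mapping to both) if and only if the topos of set-valued
sheaves `Sh(D, J)` is two-valued, i.e. the poset of subobjects of its terminal
object has exactly two elements, a bottom and a top element, which are distinct. -/
theorem joint_embedding_iff_atomic_sheaf_topos_two_valued
    (D : Type u) [SmallCategory D] [Nonempty D]
    (ore : ∀ {a b c : D} (f : b ⟶ a) (g : c ⟶ a),
      ∃ (d : D) (h : d ⟶ b) (k : d ⟶ c), h ≫ f = k ≫ g)
    (J : GrothendieckTopology D)
    (hJ : ∀ (a : D) (S : Sieve a), S ∈ J a ↔ ∃ (b : D) (f : b ⟶ a), S f) :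
    (∀ a b : D, ∃ (d : D) (_ : d ⟶ a) (_ : d ⟶ b), True) ↔
      ∃ x y : Subobject (⊤_ (Sheaf J (Type u))),
        IsBot x ∧ IsTop y ∧ x ≠ y ∧ ∀ z : Subobject (⊤_ (Sheaf J (Type u))), z = x ∨ z = y := by
  obtain rfl : J = atomic ore := GrothendieckTopology.ext (funext fun a => Set.ext (hJ a))
  let e := atomic.subobjectTerminalOrderIso ore
  rw [← forall_isSaturated_iff_jointEmbedding ore,
    ← isTwoValued_subtype_iff (p := IsSaturated) (fun _ _ _ => Iff.rfl) (fun _ _ _ => Iff.rfl)]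
  exact ⟨e.symm.isTwoValued, e.isTwoValued⟩
end
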